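/- Let f, h ∈ H^∞ with ‖h‖_∞ ≤ 1 and h(0) = 0, set φ = f + conj(T_{h̄} f). Then for every p ∈ H², ⟨[T_φ*, T_φ] p, p⟩ ≥ |(H_{f̄} p)(0)|², where (H_{f̄} p)(0) denotes the zeroth Fourier coefficient of H_{f̄} p. -/

import Mathlib

open MeasureTheory Complex Real ContinuousLinearMap
open scoped InnerProductSpace

noncomputable section

namespace SpectralArea

instance : Fact ((0:ℝ) < 2 * Real.pi) := ⟨by positivity⟩
instance : Fact ((1:ENNReal) ≤ ⊤) := ⟨le_top⟩

/-- The unit circle `∂𝔻`, parametrized by angle, i.e. `ℝ / 2πℤ`. -/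
abbrev Circle2pi : Type := AddCircle (2 * Real.pi)

/-- Normalized arclength measure `dθ/(2π)` on the circle. -/
abbrev haar : Measure Circle2pi := AddCircle.haarAddCircle

/-- `L²(∂𝔻)` with respect to normalized arclength measure. -/
abbrev L2 : Type := Lp ℂ 2 haar

/-- `L^∞(∂𝔻)`. -/
abbrev Linf : Type := Lp ℂ ⊤ haar

/-- The Hardy space `H²`: the subspace of `L²` of functions whose negative Fourier
coefficients vanish. -/
def Hardy : Submodule ℂ L2 where
  carrier := {u | ∀ n : ℤ, n < 0 → fourierCoeff (u : Circle2pi → ℂ) n = 0}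
  add_mem' := by
    intro u v hu hv n hn
    rw [← fourierBasis_repr, map_add, lp.coeFn_add, Pi.add_apply,
      fourierBasis_repr, fourierBasis_repr, hu n hn, hv n hn, add_zero]
  zero_mem' := by
    intro n hn
    rw [← fourierBasis_repr, map_zero, lp.coeFn_zero, Pi.zero_apply]
  smul_mem' := by
    intro c u hu n hn
    rw [← fourierBasis_repr, _root_.map_smul, lp.coeFn_smul, Pi.smul_apply,
      fourierBasis_repr, hu n hn, smul_zero]

lemma hardy_isClosed : IsClosed (Hardy : Set L2) := by
  have h : (Hardy : Set L2) =
      ⋂ n ∈ {n : ℤ | n < 0}, ((innerSL ℂ (fourierBasis n)) ⁻¹' {(0 : ℂ)}) := by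
    ext u
    simp only [Set.mem_iInter, Set.mem_preimage, Set.mem_setOf_eq, Set.mem_singleton_iff,
      innerSL_apply_apply]
    constructor
    · intro hu n hn
      rw [← fourierBasis.repr_apply_apply u n, fourierBasis_repr]
      exact hu n hn
    · intro hu n hn
      rw [← fourierBasis_repr, fourierBasis.repr_apply_apply u n]
      exact hu n hn
  rw [h]
  exact isClosed_biInter fun n _ =>
    isClosed_singleton.preimage (innerSL ℂ (fourierBasis n)).continuous

/-- `H²` is a complete (hence closed) subspace of `L²`. -/
instance : CompleteSpace Hardy := hardy_isClosed.completeSpace_coe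

/-- The orthogonal projection `P : L² → H²`. -/
def proj : L2 →L[ℂ] Hardy := Hardy.orthogonalProjectionOnto

/-- Pointwise multiplication by an `L^∞` function, as a bounded operator on `L²`. -/
def mulL (φ : Linf) : L2 →L[ℂ] L2 :=
  LinearMap.mkContinuous
    { toFun := fun u => ((Lp.memLp u).smul (Lp.memLp φ)).toLp
        ((φ : Circle2pi → ℂ) • (u : Circle2pi → ℂ))
      map_add' := by
        intro u v
        rw [← MemLp.toLp_add, MemLp.toLp_eq_toLp_iff]
        filter_upwards [Lp.coeFn_add u v] with x hx
        simp only [Pi.mul_apply, Pi.smul_apply, smul_eq_mul, hx, Pi.add_apply, mul_add]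
      map_smul' := by
        intro c u
        rw [RingHom.id_apply, ← MemLp.toLp_const_smul, MemLp.toLp_eq_toLp_iff]
        filter_upwards [Lp.coeFn_smul c u] with x hx
        simp only [Pi.mul_apply, Pi.smul_apply, smul_eq_mul, hx]
        ring }
    ‖φ‖
    (by
      intro u
      simp only [LinearMap.coe_mk, AddHom.coe_mk]
      rw [Lp.norm_toLp]
      calc (eLpNorm ((φ : Circle2pi → ℂ) • (u : Circle2pi → ℂ)) 2 haar).toReal
          ≤ (eLpNorm (φ : Circle2pi → ℂ) ⊤ haar * eLpNorm (u : Circle2pi → ℂ) 2 haar).toReal := by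
            apply ENNReal.toReal_mono
              (ENNReal.mul_ne_top (Lp.eLpNorm_ne_top φ) (Lp.eLpNorm_ne_top u))
            exact eLpNorm_smul_le_mul_eLpNorm (Lp.aestronglyMeasurable u)
              (Lp.aestronglyMeasurable φ)
        _ = ‖φ‖ * ‖u‖ := by
            rw [ENNReal.toReal_mul, Lp.norm_def, Lp.norm_def])

/-- Complex conjugation on `L^p` of the circle. -/
def conjLp {p : ENNReal} (f : Lp ℂ p haar) : Lp ℂ p haar :=
  Complex.conjLIE.lipschitz.compLp (map_zero Complex.conjLIE) f

/-- `f ↦ (θ ↦ conj (f (-θ)))`; on boundary values, this is `k(z) = conj (h (z̄))`. -/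
def conjReflect (h : Linf) : Linf :=
  conjLp (Lp.compMeasurePreserving (fun θ : Circle2pi => -θ)
    (Measure.measurePreserving_neg haar) h)

/-- An `L^∞` function is in `L²` (the measure is finite). -/
def toL2 (f : Linf) : L2 := ((Lp.memLp f).mono_exponent le_top).toLp f

/-- Membership in `H^∞`: a bounded function whose negative Fourier coefficients vanish
(i.e. the boundary value of a bounded analytic function on `𝔻`). -/
def MemHinf (f : Linf) : Prop := ∀ n : ℤ, n < 0 → fourierCoeff (f : Circle2pi → ℂ) n = 0

lemma fourierCoeff_congr_ae {f g : Circle2pi → ℂ} (h : f =ᵐ[haar] g) (n : ℤ) :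
    fourierCoeff f n = fourierCoeff g n := by
  simp only [fourierCoeff]
  exact integral_congr_ae (by filter_upwards [h] with x hx; rw [hx])

lemma toL2_mem_Hardy {f : Linf} (hf : MemHinf f) : toL2 f ∈ Hardy := fun n hn => by
  have h : (toL2 f : Circle2pi → ℂ) =ᵐ[haar] (f : Circle2pi → ℂ) := MemLp.coeFn_toLp _
  rw [fourierCoeff_congr_ae h n]
  exact hf n hn

/-- The Toeplitz operator `T_φ : H² → H²`, `T_φ u = P (φ u)`. -/
def Toeplitz (φ : Linf) : Hardy →L[ℂ] Hardy := proj ∘L mulL φ ∘L Hardy.subtypeL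

/-- The Toeplitz operator viewed as acting on `L²` (precompose with inclusion,
postcompose with inclusion): `u ↦ P (φ u)` as an element of `L²`. -/
def ToeplitzL2 (φ : Linf) : L2 →L[ℂ] L2 := Hardy.subtypeL ∘L proj ∘L mulL φ

/-- The unitary `U` on `L²`: `(U h)(z) = z̄ h(z̄)`, in angle coordinates
`(U h)(θ) = e^{-iθ} h(-θ)`. -/
def Umap : L2 →L[ℂ] L2 :=
  mulL (fourierLp ⊤ (-1)) ∘L
    (Lp.compMeasurePreservingₗᵢ ℂ (fun θ : Circle2pi => -θ)
      (Measure.measurePreserving_neg haar)).toContinuousLinearMap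

/-- The Hankel operator `H_φ = U (I - P) M_φ`, viewed on all of `L²`. -/
def Hankel (φ : Linf) : L2 →L[ℂ] L2 :=
  Umap ∘L (ContinuousLinearMap.id ℂ L2 - Hardy.subtypeL ∘L proj) ∘L mulL φ

/-- The self-commutator `[T*, T] = T*T - TT*`. -/
def selfCommutator (T : Hardy →L[ℂ] Hardy) : Hardy →L[ℂ] Hardy :=
  adjoint T ∘L T - T ∘L adjoint T

section AuxLemmas
open scoped ComplexConjugate


lemma mulL_coeFn (φ : Linf) (u : L2) :
    (mulL φ u : Circle2pi → ℂ) =ᵐ[haar]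
      fun x => (φ : Circle2pi → ℂ) x * (u : Circle2pi → ℂ) x := by
  filter_upwards [MemLp.coeFn_toLp ((Lp.memLp u).smul (Lp.memLp φ) (r := 2))] with x hx
  exact hx

lemma conjLp_coeFn {p : ENNReal} (u : Lp ℂ p haar) :
    (conjLp u : Circle2pi → ℂ) =ᵐ[haar] fun x => conj ((u : Circle2pi → ℂ) x) := by
  filter_upwards [Complex.conjLIE.lipschitz.coeFn_compLp (map_zero Complex.conjLIE) u] with x hx
  exact hx

lemma toL2_coeFn (f : Linf) : (toL2 f : Circle2pi → ℂ) =ᵐ[haar] (f : Circle2pi → ℂ) :=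
  MemLp.coeFn_toLp _

lemma inner_L2 (u v : L2) :
    ⟪u, v⟫_ℂ = ∫ x, conj ((u : Circle2pi → ℂ) x) * (v : Circle2pi → ℂ) x ∂haar := by
  rw [MeasureTheory.L2.inner_def]
  simp [RCLike.inner_apply]
  exact integral_congr_ae (Filter.Eventually.of_forall fun x => mul_comm _ _)

lemma parseval (u v : L2) :
    ⟪u, v⟫_ℂ = ∑' n : ℤ, conj (fourierCoeff (u : Circle2pi → ℂ) n) *
      fourierCoeff (v : Circle2pi → ℂ) n := by
  rw [← fourierBasis.repr.inner_map_map u v, lp.inner_eq_tsum]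
  congr 1; ext n
  rw [RCLike.inner_apply, fourierBasis_repr, fourierBasis_repr]
  exact mul_comm _ _

lemma fourierCoeff_conj (g : Circle2pi → ℂ) (n : ℤ) :
    fourierCoeff (fun x => conj (g x)) n = conj (fourierCoeff g (-n)) := by
  simp only [fourierCoeff, neg_neg]
  rw [← integral_conj]
  congr 1; ext x
  simp only [smul_eq_mul, map_mul, ← fourier_neg, Complex.conj_conj]

lemma fourier_apply_neg (n : ℤ) (x : Circle2pi) : fourier n (-x) = fourier (-n) x := by
  rw [fourier_apply, zsmul_neg, fourier_neg', ← fourier_neg]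

lemma fourierCoeff_comp_neg (g : Circle2pi → ℂ) (n : ℤ) :
    fourierCoeff (fun x => g (-x)) n = fourierCoeff g (-n) := by
  simp only [fourierCoeff]
  rw [← (Measure.measurePreserving_neg haar).integral_comp
    (MeasurableEquiv.neg Circle2pi).measurableEmbedding (fun y => fourier (- -n) y • g y)]
  congr 1; ext x
  simp [fourier_apply_neg, neg_neg]

lemma fourierCoeff_congr_ae' {f g : Circle2pi → ℂ} (h : f =ᵐ[haar] g) (n : ℤ) :
    fourierCoeff f n = fourierCoeff g n := fourierCoeff_congr_ae h n



lemma fourierCoeff_eq_inner (u : L2) (n : ℤ) :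
    fourierCoeff (u : Circle2pi → ℂ) n = ⟪(fourierBasis n : L2), u⟫_ℂ := by
  rw [← fourierBasis_repr, fourierBasis.repr_apply_apply]

lemma fourierCoeff_basis (n m : ℤ) :
    fourierCoeff ((fourierBasis n : L2) : Circle2pi → ℂ) m = if m = n then 1 else 0 := by
  rw [← fourierBasis_repr, fourierBasis.repr_self, lp.single_apply]
  simp [Pi.single_apply]

lemma basis_mem_hardy {n : ℤ} (hn : 0 ≤ n) : (fourierBasis n : L2) ∈ Hardy := by
  intro m hm
  rw [fourierCoeff_basis]
  simp only [ite_eq_right_iff]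
  intro h; omega

lemma inner_zero_of_antiHardy {u : L2}
    (hu : ∀ n : ℤ, 0 ≤ n → fourierCoeff (u : Circle2pi → ℂ) n = 0) (p : Hardy) :
    ⟪u, (p : L2)⟫_ℂ = 0 := by
  rw [parseval]
  have h : ∀ n : ℤ, conj (fourierCoeff (u : Circle2pi → ℂ) n) *
      fourierCoeff ((p : L2) : Circle2pi → ℂ) n = 0 := by
    intro n
    rcases le_or_gt 0 n with h | h
    · simp [hu n h]
    · simp [p.2 n h]
  exact (tsum_congr h).trans tsum_zero

lemma mem_orthogonal_of_antiHardy {u : L2}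
    (hu : ∀ n : ℤ, 0 ≤ n → fourierCoeff (u : Circle2pi → ℂ) n = 0) : u ∈ Hardyᗮ := by
  rw [Submodule.mem_orthogonal]
  intro v hv
  rw [← inner_conj_symm, inner_zero_of_antiHardy hu ⟨v, hv⟩, map_zero]

lemma inner_mulL (φ : Linf) (u v : L2) :
    ⟪mulL φ u, v⟫_ℂ = ⟪u, mulL (conjLp φ) v⟫_ℂ := by
  rw [inner_L2, inner_L2]
  apply integral_congr_ae
  filter_upwards [mulL_coeFn φ u, mulL_coeFn (conjLp φ) v, conjLp_coeFn φ] with x h1 h2 h3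
  rw [h1, h2, h3]
  simp only [map_mul]
  ring

lemma norm_mulL_le (φ : Linf) : ‖mulL φ‖ ≤ ‖φ‖ :=
  LinearMap.mkContinuous_norm_le _ (norm_nonneg φ) _

lemma norm_mulL_apply_le (φ : Linf) (u : L2) : ‖mulL φ u‖ ≤ ‖φ‖ * ‖u‖ :=
  ((mulL φ).le_opNorm u).trans (mul_le_mul_of_nonneg_right (norm_mulL_le φ) (norm_nonneg u))

/-- `Q`, the projection onto Hardy as an endomorphism of `L2`. -/
def Q : L2 →L[ℂ] L2 := Hardy.subtypeL ∘L proj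

lemma sub_Q_inner (x : L2) (p : Hardy) : ⟪x - Q x, (p : L2)⟫_ℂ = 0 := by
  have := Hardy.sub_starProjection_mem_orthogonal x
  exact (Submodule.mem_orthogonal' Hardy _).1 this _ p.2

lemma Q_mem (x : L2) : Q x ∈ Hardy := (proj x).2

lemma Q_coe (x : L2) : Q x = ((proj x : Hardy) : L2) := rfl

lemma Q_eq_self {x : L2} (hx : x ∈ Hardy) : Q x = x := by
  have h : proj x = ⟨x, hx⟩ := Hardy.orthogonalProjectionOnto_mem_subspace_eq_self ⟨x, hx⟩
  rw [Q_coe, h]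

lemma Q_eq_zero {x : L2} (hx : x ∈ Hardyᗮ) : Q x = 0 := by
  have h : proj x = 0 := Submodule.orthogonalProjectionOnto_apply_of_mem_orthogonal hx
  rw [Q_coe, h, Submodule.coe_zero]

lemma pythagoras (x : L2) : ‖x‖ ^ 2 = ‖Q x‖ ^ 2 + ‖x - Q x‖ ^ 2 := by
  have horth : ⟪Q x, x - Q x⟫_ℂ = 0 := by
    have h0 := sub_Q_inner x (proj x)
    rw [Q_coe] at h0
    rw [← inner_conj_symm, Q_coe, h0, map_zero]
  have hx : x = Q x + (x - Q x) := by abel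
  calc ‖x‖ ^ 2 = ‖Q x + (x - Q x)‖ ^ 2 := by rw [← hx]
    _ = ‖Q x‖ ^ 2 + ‖x - Q x‖ ^ 2 := by
        rw [norm_add_sq (𝕜 := ℂ), horth]
        simp



lemma fourierBasis_eq (n : ℤ) : (fourierBasis n : L2) = fourierLp 2 n :=
  congrFun coe_fourierBasis n

lemma fourierBasis_coeFn (n : ℤ) :
    ((fourierBasis n : L2) : Circle2pi → ℂ) =ᵐ[haar] ⇑(fourier n) := by
  rw [fourierBasis_eq]; exact coeFn_fourierLp 2 n

lemma norm_fourier_apply (n : ℤ) (x : Circle2pi) : ‖(fourier n x : ℂ)‖ = 1 := by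
  rw [fourier_apply, Circle.norm_coe]

lemma mulL_basis_coeff (φ : Linf) (n m : ℤ) :
    fourierCoeff ((mulL φ (fourierBasis n)) : Circle2pi → ℂ) m
      = fourierCoeff (φ : Circle2pi → ℂ) (m - n) := by
  have h1 : (mulL φ (fourierBasis n) : Circle2pi → ℂ) =ᵐ[haar]
      fun x => (φ : Circle2pi → ℂ) x * fourier n x := by
    filter_upwards [mulL_coeFn φ (fourierBasis n), fourierBasis_coeFn n] with x hx hy
    rw [hx, hy]
  rw [fourierCoeff_congr_ae' h1]
  simp only [fourierCoeff, smul_eq_mul]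
  congr 1; ext x
  rw [show -(m - n) = -m + n by ring, fourier_add]; ring

lemma fourierCoeff_conjLp {p : ENNReal} (u : Lp ℂ p haar) (n : ℤ) :
    fourierCoeff ((conjLp u : Lp ℂ p haar) : Circle2pi → ℂ) n
      = conj (fourierCoeff (u : Circle2pi → ℂ) (-n)) := by
  rw [fourierCoeff_congr_ae' (conjLp_coeFn u), fourierCoeff_conj]

lemma mulL_mem_hardy {φ : Linf} (hφ : MemHinf φ) {u : L2} (hu : u ∈ Hardy) :
    mulL φ u ∈ Hardy := by
  intro m hm
  rw [fourierCoeff_eq_inner]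
  have h : ⟪(fourierBasis m : L2), mulL φ u⟫_ℂ = ⟪mulL (conjLp φ) (fourierBasis m), u⟫_ℂ := by
    rw [← inner_conj_symm, inner_mulL, inner_conj_symm]
  rw [h]
  refine inner_zero_of_antiHardy ?_ ⟨u, hu⟩
  intro k hk
  rw [mulL_basis_coeff, fourierCoeff_conjLp, hφ (-(k - m)) (by omega), map_zero]

lemma Umap_coeFn (u : L2) : ((Umap u : L2) : Circle2pi → ℂ) =ᵐ[haar]
    fun x => fourier (-1) x * (u : Circle2pi → ℂ) (-x) := by
  have h1 := mulL_coeFn (fourierLp ⊤ (-1))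
    ((Lp.compMeasurePreservingₗᵢ ℂ (fun θ : Circle2pi => -θ)
      (Measure.measurePreserving_neg haar)).toContinuousLinearMap u)
  have h2 := Lp.coeFn_compMeasurePreserving (μ := haar) u (Measure.measurePreserving_neg haar)
  have h3 := coeFn_fourierLp (T := 2 * π) ⊤ (-1)
  filter_upwards [h1, h2, h3] with x hx hy hz
  have e1 : (Umap u : L2) = mulL (fourierLp ⊤ (-1))
      ((Lp.compMeasurePreservingₗᵢ ℂ (fun θ : Circle2pi => -θ)
        (Measure.measurePreserving_neg haar)).toContinuousLinearMap u) := rfl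
  have e2 : ((Lp.compMeasurePreservingₗᵢ ℂ (fun θ : Circle2pi => -θ)
        (Measure.measurePreserving_neg haar)).toContinuousLinearMap u)
      = Lp.compMeasurePreserving (fun θ : Circle2pi => -θ)
        (Measure.measurePreserving_neg haar) u := rfl
  rw [e1, hx, hz, e2, hy]
  rfl

lemma Umap_coeff (u : L2) (n : ℤ) :
    fourierCoeff ((Umap u : L2) : Circle2pi → ℂ) n
      = fourierCoeff (u : Circle2pi → ℂ) (-(n + 1)) := by
  rw [fourierCoeff_congr_ae' (Umap_coeFn u)]
  have h : fourierCoeff (fun x => (fourier (-1) x : ℂ) * (u : Circle2pi → ℂ) (-x)) n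
      = fourierCoeff (fun x => (u : Circle2pi → ℂ) (-x)) (n + 1) := by
    simp only [fourierCoeff, smul_eq_mul]
    congr 1; ext x
    rw [show -(n + 1) = -n + -1 by ring, fourier_add]; ring
  rw [h, fourierCoeff_comp_neg]

lemma norm_mulL_fourierinf (v : L2) : ‖mulL (fourierLp ⊤ (-1)) v‖ = ‖v‖ := by
  rw [Lp.norm_def, Lp.norm_def]
  congr 1
  apply eLpNorm_congr_norm_ae
  filter_upwards [mulL_coeFn (fourierLp ⊤ (-1)) v, coeFn_fourierLp (T := 2 * π) ⊤ (-1)]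
    with x h1 h2
  rw [h1, h2, norm_mul, norm_fourier_apply, one_mul]

lemma norm_Umap (u : L2) : ‖Umap u‖ = ‖u‖ := by
  have : Umap u = mulL (fourierLp ⊤ (-1))
      ((Lp.compMeasurePreservingₗᵢ ℂ (fun θ : Circle2pi => -θ)
        (Measure.measurePreserving_neg haar)).toContinuousLinearMap u) := rfl
  rw [this, norm_mulL_fourierinf]
  exact (Lp.compMeasurePreservingₗᵢ ℂ _ _).norm_map u



lemma inner_Qproj (w : L2) (v : Hardy) :
    ⟪((proj w : Hardy) : L2), (v : L2)⟫_ℂ = ⟪w, (v : L2)⟫_ℂ := by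
  have h := sub_Q_inner w v
  rw [inner_sub_left, Q_coe, sub_eq_zero] at h
  rw [h]

lemma toeplitz_adjoint (φ : Linf) : adjoint (Toeplitz φ) = Toeplitz (conjLp φ) := by
  symm
  apply (ContinuousLinearMap.eq_adjoint_iff _ _).2
  intro x y
  rw [Submodule.coe_inner, Submodule.coe_inner]
  have hL : ⟪((Toeplitz (conjLp φ) x : Hardy) : L2), (y : L2)⟫_ℂ
      = ⟪mulL (conjLp φ) (x : L2), (y : L2)⟫_ℂ := inner_Qproj (mulL (conjLp φ) (x : L2)) y
  have hR : ⟪(x : L2), ((Toeplitz φ y : Hardy) : L2)⟫_ℂ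
      = ⟪(x : L2), mulL φ (y : L2)⟫_ℂ := by
    calc ⟪(x : L2), ((Toeplitz φ y : Hardy) : L2)⟫_ℂ
        = conj ⟪((proj (mulL φ (y : L2)) : Hardy) : L2), (x : L2)⟫_ℂ :=
          (inner_conj_symm _ _).symm
      _ = conj ⟪mulL φ (y : L2), (x : L2)⟫_ℂ := by rw [inner_Qproj (mulL φ (y : L2)) x]
      _ = ⟪(x : L2), mulL φ (y : L2)⟫_ℂ := inner_conj_symm _ _
  rw [hL, hR]
  calc ⟪mulL (conjLp φ) (x : L2), (y : L2)⟫_ℂ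
      = conj ⟪(y : L2), mulL (conjLp φ) (x : L2)⟫_ℂ := (inner_conj_symm _ _).symm
    _ = conj ⟪mulL φ (y : L2), (x : L2)⟫_ℂ := by rw [inner_mulL]
    _ = ⟪(x : L2), mulL φ (y : L2)⟫_ℂ := inner_conj_symm _ _

lemma inner_selfComm (T : Hardy →L[ℂ] Hardy) (p : Hardy) :
    ⟪selfCommutator T p, p⟫_ℂ = ((‖T p‖ ^ 2 - ‖adjoint T p‖ ^ 2 : ℝ) : ℂ) := by
  have h1 : selfCommutator T p = adjoint T (T p) - T (adjoint T p) := rfl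
  rw [h1, inner_sub_left, ContinuousLinearMap.adjoint_inner_left,
    inner_self_eq_norm_sq_to_K]
  have h2 : ⟪T (adjoint T p), p⟫_ℂ = ⟪adjoint T p, adjoint T p⟫_ℂ := by
    have h3 := ContinuousLinearMap.adjoint_inner_left T (adjoint T p) p
    rw [← inner_conj_symm (E := Hardy) (𝕜 := ℂ), ← h3, inner_self_eq_norm_sq_to_K (E := Hardy) (𝕜 := ℂ)]
    simp
  rw [h2, inner_self_eq_norm_sq_to_K (E := Hardy) (𝕜 := ℂ)]
  push_cast
  with_unfolding_all rfl

lemma norm_hardy (x : Hardy) : ‖x‖ = ‖(x : L2)‖ := rfl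

lemma toeplitz_coe (φ : Linf) (p : Hardy) : ((Toeplitz φ p : Hardy) : L2) = Q (mulL φ (p : L2)) :=
  rfl

lemma mulL_add_symbol (φ ψ : Linf) (u : L2) :
    mulL (φ + ψ) u = mulL φ u + mulL ψ u := by
  apply Lp.ext
  filter_upwards [mulL_coeFn (φ + ψ) u, mulL_coeFn φ u, mulL_coeFn ψ u,
    Lp.coeFn_add (mulL φ u) (mulL ψ u), Lp.coeFn_add φ ψ] with x h1 h2 h3 h4 h5
  rw [h1, h4, Pi.add_apply, h2, h3, h5, Pi.add_apply]
  ring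

lemma mulL_assoc (φ ψ : Linf) (u : L2) (prod : Linf)
    (hprod : (prod : Circle2pi → ℂ) =ᵐ[haar]
      fun x => (φ : Circle2pi → ℂ) x * (ψ : Circle2pi → ℂ) x) :
    mulL prod u = mulL φ (mulL ψ u) := by
  apply Lp.ext
  filter_upwards [mulL_coeFn prod u, mulL_coeFn φ (mulL ψ u), mulL_coeFn ψ u, hprod]
    with x h1 h2 h3 h4
  rw [h1, h2, h3, h4]
  ring

lemma norm_mulL_conj (φ : Linf) (u : L2) : ‖mulL (conjLp φ) u‖ = ‖mulL φ u‖ := by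
  rw [Lp.norm_def, Lp.norm_def]
  congr 1
  apply eLpNorm_congr_norm_ae
  filter_upwards [mulL_coeFn (conjLp φ) u, mulL_coeFn φ u, conjLp_coeFn φ] with x h1 h2 h3
  rw [h1, h2, h3, norm_mul, norm_mul, RCLike.norm_conj]

lemma hankel_eq (ψ : Linf) (u : L2) :
    Hankel ψ u = Umap (mulL ψ u - Q (mulL ψ u)) := rfl

lemma norm_sq_toeplitz (ψ : Linf) (p : Hardy) :
    ‖Toeplitz ψ p‖ ^ 2 = ‖mulL ψ (p : L2)‖ ^ 2 - ‖mulL ψ (p : L2) - Q (mulL ψ (p : L2))‖ ^ 2 := by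
  rw [norm_hardy, toeplitz_coe]
  have := pythagoras (mulL ψ (p : L2))
  linarith


end AuxLemmas

open scoped ComplexConjugate in
set_option maxHeartbeats 2000000 in
open scoped ComplexOrder in
/-- For `f, h ∈ H^∞` with `‖h‖_∞ ≤ 1`, `h(0) = 0` and
`φ = f + conj (T_{h̄} f)`, for every `p ∈ H²`:
`⟨[T_φ*, T_φ] p, p⟩ ≥ |(H_{f̄} p)(0)|²`. -/
theorem inner_selfCommutator_ge (f h φ : Linf)
    (hf : MemHinf f) (hh : MemHinf h) (hhnorm : ‖h‖ ≤ 1)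
    (hh0 : fourierCoeff (h : Circle2pi → ℂ) 0 = 0)
    (hφ : toL2 φ = toL2 f +
      conjLp ((Toeplitz (conjLp h) ⟨toL2 f, toL2_mem_Hardy hf⟩ : Hardy) : L2)) :
    ∀ p : Hardy,
      ((‖fourierCoeff ((Hankel (conjLp f) (p : L2)) : Circle2pi → ℂ) 0‖ ^ 2 : ℝ) : ℂ) ≤
        ⟪selfCommutator (Toeplitz φ) p, p⟫_ℂ := by
  intro p
  set v : L2 := mulL (conjLp h) (toL2 f) with hv
  set g : L2 := ((Toeplitz (conjLp h) ⟨toL2 f, toL2_mem_Hardy hf⟩ : Hardy) : L2) with hg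
  have hgQv : g = Q v := rfl
  set w : L2 := mulL (conjLp f) (p : L2) - Q (mulL (conjLp f) (p : L2)) with hw
  set c : ℂ := fourierCoeff (w : Circle2pi → ℂ) (-1) with hc
  -- Step A : the Hankel coefficient is c
  have hA : fourierCoeff ((Hankel (conjLp f) ((p : L2))) : Circle2pi → ℂ) 0 = c := by
    rw [hankel_eq, Umap_coeff]
    show fourierCoeff ((w : L2) : Circle2pi → ℂ) (-(0 + 1)) = c
    norm_num [hc]
  -- Step B : the symbol gL = φ - f
  set gL : Linf := φ - f with hgLdef
  have hφf : (φ : Circle2pi → ℂ) =ᵐ[haar]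
      fun x => (f : Circle2pi → ℂ) x + conj ((g : Circle2pi → ℂ) x) := by
    have h1 : ((toL2 φ : L2) : Circle2pi → ℂ) =ᵐ[haar]
        ((toL2 f + conjLp g : L2) : Circle2pi → ℂ) := by rw [← hφ]
    filter_upwards [toL2_coeFn φ, toL2_coeFn f, Lp.coeFn_add (toL2 f) (conjLp g),
      conjLp_coeFn g, h1] with x e1 e2 e3 e4 e5
    rw [← e1, e5, e3, Pi.add_apply, e2, e4]
  have hgL_ae : (gL : Circle2pi → ℂ) =ᵐ[haar]
      fun x => conj (((Q v : L2) : Circle2pi → ℂ) x) := by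
    rw [← hgQv]
    filter_upwards [Lp.coeFn_sub φ f, hφf] with x e1 e2
    rw [← hgLdef] at e1
    rw [e1, Pi.sub_apply, e2]
    ring
  -- Step C : conj gL is analytic
  have hgL_anal : MemHinf (conjLp gL) := by
    intro n hn
    rw [fourierCoeff_conjLp, fourierCoeff_congr_ae' hgL_ae, fourierCoeff_conj, neg_neg]
    rw [Q_mem v n hn]
    simp
  -- Step D : splitting of the multiplication operators
  have hsplit : mulL φ (p : L2) = mulL f (p : L2) + mulL gL (p : L2) := by
    have e : f + gL = φ := by rw [hgLdef]; abel
    rw [← e, mulL_add_symbol]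
  have hconjadd : conjLp φ = conjLp f + conjLp gL := by
    apply Lp.ext
    filter_upwards [conjLp_coeFn φ, conjLp_coeFn f, conjLp_coeFn gL,
      Lp.coeFn_add (conjLp f) (conjLp gL), Lp.coeFn_sub φ f] with x e1 e2 e3 e4 e5
    rw [e1, e4, Pi.add_apply, e2, e3]
    rw [← hgLdef] at e5
    rw [e5, Pi.sub_apply]
    simp only [map_sub]
    ring
  have hsplitc : mulL (conjLp φ) (p : L2)
      = mulL (conjLp f) (p : L2) + mulL (conjLp gL) (p : L2) := by
    rw [hconjadd, mulL_add_symbol]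
  -- Step E : antianalytic Hankel part equals w
  have hDbar : mulL (conjLp φ) (p : L2) - Q (mulL (conjLp φ) (p : L2)) = w := by
    rw [hsplitc, map_add, Q_eq_self (mulL_mem_hardy hgL_anal p.2), hw]
    abel
  -- Step F : analytic Hankel part
  have hD : mulL φ (p : L2) - Q (mulL φ (p : L2))
      = mulL gL (p : L2) - Q (mulL gL (p : L2)) := by
    rw [hsplit, map_add, Q_eq_self (mulL_mem_hardy hf p.2)]
    abel
  -- Step G : the bounded function h * conj f and the analytic remainder
  set hfbar : Linf := ((Lp.memLp (conjLp f)).smul (Lp.memLp h)).toLp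
      ((h : Circle2pi → ℂ) • ((conjLp f : Linf) : Circle2pi → ℂ)) with hhfbar
  have hfbar_ae : (hfbar : Circle2pi → ℂ) =ᵐ[haar]
      fun x => (h : Circle2pi → ℂ) x * conj ((f : Circle2pi → ℂ) x) := by
    filter_upwards [MemLp.coeFn_toLp
      ((Lp.memLp (conjLp f)).smul (Lp.memLp h) (r := ⊤)), conjLp_coeFn f] with x e1 e2
    rw [← hhfbar] at e1
    rw [e1, Pi.smul_apply', smul_eq_mul, e2]
  set rL : Linf := hfbar - gL with hrLdef
  have hr_ae : (rL : Circle2pi → ℂ) =ᵐ[haar]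
      fun x => conj (((v - Q v : L2) : Circle2pi → ℂ) x) := by
    filter_upwards [Lp.coeFn_sub hfbar gL, hfbar_ae, hgL_ae, Lp.coeFn_sub v (Q v),
      mulL_coeFn (conjLp h) (toL2 f), conjLp_coeFn h, toL2_coeFn f] with x e1 e2 e3 e4 e5 e6 e7
    rw [← hrLdef] at e1
    rw [e1, Pi.sub_apply, e2, e3, e4, Pi.sub_apply]
    rw [← hv] at e5
    rw [e5, e6, e7]
    simp only [map_sub, map_mul, Complex.conj_conj]
    try ring
  have hrL_anal : MemHinf rL := by
    intro n hn
    rw [fourierCoeff_congr_ae' hr_ae, fourierCoeff_conj]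
    have e : fourierCoeff ((v - Q v : L2) : Circle2pi → ℂ) (-n) = 0 := by
      rw [fourierCoeff_eq_inner, ← inner_conj_symm]
      have hb : (fourierBasis (-n) : L2) ∈ Hardy := basis_mem_hardy (by omega)
      rw [sub_Q_inner v ⟨_, hb⟩, map_zero]
    rw [e, map_zero]
  -- Step H : reduce to h * (conj f · p)
  have hsplit2 : mulL gL (p : L2) = mulL hfbar (p : L2) - mulL rL (p : L2) := by
    have e : hfbar = gL + rL := by rw [hrLdef]; abel
    have e2 := mulL_add_symbol gL rL (p : L2)
    rw [← e] at e2
    rw [e2]; abel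
  have hD2 : mulL gL (p : L2) - Q (mulL gL (p : L2))
      = mulL hfbar (p : L2) - Q (mulL hfbar (p : L2)) := by
    rw [hsplit2, map_sub, Q_eq_self (mulL_mem_hardy hrL_anal p.2)]
    abel
  -- Step I : associativity
  have hassoc : mulL hfbar (p : L2) = mulL h (mulL (conjLp f) (p : L2)) :=
    mulL_assoc h (conjLp f) _ hfbar
      (by filter_upwards [hfbar_ae, conjLp_coeFn f] with x e1 e2; rw [e1, e2])
  -- Step J : only w matters
  have hD3 : mulL hfbar (p : L2) - Q (mulL hfbar (p : L2)) = mulL h w - Q (mulL h w) := by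
    rw [hassoc]
    have e : mulL h (mulL (conjLp f) (p : L2))
        = mulL h w + mulL h (Q (mulL (conjLp f) (p : L2))) := by
      rw [← map_add]
      congr 1
      rw [hw]; abel
    rw [e, map_add, Q_eq_self (mulL_mem_hardy hh (Q_mem _))]
    abel
  -- Step K : subtract the constant term
  have hb1 : mulL h (fourierBasis (-1) : L2) ∈ Hardy := by
    intro m hm
    rw [mulL_basis_coeff]
    rcases lt_or_eq_of_le (show m - (-1) ≤ 0 by omega) with hlt | heq
    · exact hh _ hlt
    · rw [heq]; exact hh0
  set w' : L2 := w - c • (fourierBasis (-1) : L2) with hw'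
  have hDw' : mulL h w - Q (mulL h w) = mulL h w' - Q (mulL h w') := by
    have e : mulL h w = mulL h w' + c • mulL h (fourierBasis (-1) : L2) := by
      have e1 := (mulL h).map_sub w (c • (fourierBasis (-1) : L2))
      have e2 := (mulL h).map_smul c (fourierBasis (-1) : L2)
      rw [← hw'] at e1
      rw [e1, e2]; abel
    rw [e, map_add, _root_.map_smul, Q_eq_self hb1]
    abel
  -- Step L : norm estimates
  have hDle : ‖mulL h w' - Q (mulL h w')‖ ^ 2 ≤ ‖w'‖ ^ 2 := by
    have h1 : ‖mulL h w' - Q (mulL h w')‖ ^ 2 ≤ ‖mulL h w'‖ ^ 2 := by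
      have := pythagoras (mulL h w')
      nlinarith [sq_nonneg ‖Q (mulL h w')‖]
    have h2 : ‖mulL h w'‖ ≤ ‖w'‖ := by
      have := norm_mulL_apply_le h w'
      nlinarith [norm_nonneg w']
    nlinarith [norm_nonneg (mulL h w' - Q (mulL h w')), norm_nonneg (mulL h w')]
  have hw'_norm : ‖w'‖ ^ 2 = ‖w‖ ^ 2 - ‖c‖ ^ 2 := by
    have hbw : ⟪(fourierBasis (-1) : L2), w⟫_ℂ = c := (fourierCoeff_eq_inner w (-1)).symm
    have hbnorm : ‖(fourierBasis (-1) : L2)‖ = 1 := fourierBasis.orthonormal.1 (-1)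
    have hwb : ⟪w, (fourierBasis (-1) : L2)⟫_ℂ = conj c := by
      rw [← inner_conj_symm, hbw]
    rw [hw', norm_sub_sq (𝕜 := ℂ), inner_smul_right, hwb, RCLike.mul_conj,
      norm_smul, hbnorm]
    simp
    rw [← Complex.ofReal_pow, Complex.ofReal_re]
    ring
  -- Step M : assemble
  have hcomm : ⟪selfCommutator (Toeplitz φ) p, p⟫_ℂ
      = ((‖w‖ ^ 2 - ‖mulL h w' - Q (mulL h w')‖ ^ 2 : ℝ) : ℂ) := by
    rw [inner_selfComm, toeplitz_adjoint, norm_sq_toeplitz, norm_sq_toeplitz,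
      norm_mulL_conj φ (p : L2), hDbar, hD, hD2, hD3, hDw']
    push_cast
    ring
  rw [hA, hcomm]
  have : (‖c‖ ^ 2 : ℝ) ≤ ‖w‖ ^ 2 - ‖mulL h w' - Q (mulL h w')‖ ^ 2 := by linarith
  exact_mod_cast Complex.real_le_real.2 this


end SpectralArea
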